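/- Let $\Gamma\cong\mathbb{Z}_p^d$ with $d\geq 2$, $\Lambda_\Gamma=\mathbb{Z}_p[[\Gamma]]$, and let $g\in\Lambda_\Gamma$ be not divisible by $p$. Then there exists an element $\psi\in\Gamma$, extendable to a $\mathbb{Z}_p$-basis of $\Gamma$, such that the set $T_\psi=\{\chi\in\hat\Gamma : \chi(\psi)=1\}$ is not contained in $\nabla_g=\{\chi\in\hat\Gamma : \chi(g)\in p\mathcal{O}\}$; consequently, if $\Psi$ is the closed subgroup topologically generated by $\psi$ and $p_{L/L'}:\Lambda_\Gamma\to\Lambda_{\Gamma/\Psi}$ the induced projection, then $p_{L/L'}(g)$ is not divisible by $p$. -/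

import Mathlib

/-- `ℚ_p/ℤ_p ≅ μ_{p^∞}`: continuous characters `Γ → μ_{p^∞}` of `Γ ≅ ℤ_p^d` are the
same as `ℤ_p`-linear maps `Γ → ℚ_p/ℤ_p`. -/
abbrev QpModZp (p : ℕ) [Fact p.Prime] :=
  ℚ_[p] ⧸ LinearMap.range (Algebra.linearMap ℤ_[p] ℚ_[p])

lemma stmt14_mem_range_iff (p : ℕ) [Fact p.Prime] (x : ℚ_[p]) :
    x ∈ LinearMap.range (Algebra.linearMap ℤ_[p] ℚ_[p]) ↔ ‖x‖ ≤ 1 := by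
  constructor
  · rintro ⟨z, rfl⟩
    simpa [PadicInt.algebraMap_apply] using z.norm_le_one
  · intro h
    exact ⟨show ℤ_[p] from ⟨x, h⟩, rfl⟩

lemma stmt14_smul_eq (p : ℕ) [Fact p.Prime] (z : ℤ_[p]) (y : ℚ_[p]) :
    z • y = (z : ℚ_[p]) * y := by
  rw [Algebra.smul_def, PadicInt.algebraMap_apply]

/-- `ℚ_p/ℤ_p` is a torsion module. -/
lemma stmt14_torsion (p : ℕ) [Fact p.Prime] (q : QpModZp p) :
    ∃ m : ℕ, (p : ℤ_[p]) ^ m • q = 0 := by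
  obtain ⟨y, rfl⟩ := Submodule.mkQ_surjective _ q
  obtain ⟨m, hm⟩ := pow_unbounded_of_one_lt ‖y‖
    (by exact_mod_cast (Fact.out : p.Prime).one_lt : (1:ℝ) < p)
  refine ⟨m, ?_⟩
  rw [← map_smul, Submodule.mkQ_apply, Submodule.Quotient.mk_eq_zero,
    stmt14_mem_range_iff, stmt14_smul_eq]
  push_cast
  rw [norm_mul, norm_pow, Padic.norm_p]
  calc ((p:ℝ)⁻¹) ^ m * ‖y‖ ≤ ((p:ℝ)⁻¹) ^ m * (p:ℝ)^m :=
        mul_le_mul_of_nonneg_left hm.le (by positivity)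
    _ = 1 := by
        rw [← mul_pow, inv_mul_cancel₀
          (by exact_mod_cast (Fact.out : p.Prime).pos.ne'), one_pow]

open Polynomial in
/-- A linear functional `x ↦ ∑ x k * c ^ k` that is nonzero on finitely many
given nonzero vectors. -/
lemma stmt14_exists_c (p : ℕ) [Fact p.Prime] (d n : ℕ) (s : Fin n → (Fin d → ℤ_[p]))
    (hs : ∀ i, s i ≠ 0) :
    ∃ c : ℤ_[p], ∀ i, ∑ k : Fin d, s i k * c ^ (k:ℕ) ≠ 0 := by
  set P : Fin n → ℤ_[p][X] := fun i => ∑ k : Fin d, monomial (k:ℕ) (s i k) with hPdef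
  have hcoeff : ∀ i (k0 : Fin d), (P i).coeff (k0:ℕ) = s i k0 := by
    intro i k0
    rw [hPdef]
    simp only [Polynomial.finset_sum_coeff, Polynomial.coeff_monomial]
    rw [Finset.sum_eq_single k0]
    · simp
    · intro b _ hb
      rw [if_neg (fun h => hb (Fin.val_injective h))]
    · simp
  have hP : ∀ i, P i ≠ 0 := by
    intro i h
    obtain ⟨k0, hk0⟩ := Function.ne_iff.mp (hs i)
    exact hk0 (by rw [← hcoeff i k0, h]; simp)
  have hfin : (⋃ i, {x | (P i).IsRoot x}).Finite :=
    Set.finite_iUnion fun i => Polynomial.finite_setOf_isRoot (hP i)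
  obtain ⟨c, hc⟩ := hfin.infinite_compl.nonempty
  refine ⟨c, fun i h => ?_⟩
  apply hc
  refine Set.mem_iUnion.mpr ⟨i, ?_⟩
  show (P i).eval c = 0
  rw [hPdef]
  simpa [Polynomial.eval_finset_sum] using h

/-- Let `Γ ≅ ℤ_p^d` with `d ≥ 2` and let `g ∈ Λ_Γ = ℤ_p[[Γ]]` be not
divisible by `p`.  Identify the character group `Γ̂ = Hom_cont(Γ, μ_{p^∞})` with the
`ℤ_p`-linear maps `Γ → ℚ_p/ℤ_p`.  By Monsky's theorem the set
`∇_g = {χ : χ(g) ∈ p𝒪}` is either empty or contained in a finite union of sets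
`T_i = {χ : χ(σ_{i,j}) = ζ_{i,j}, j = 1,…,ν_i}` with each tuple `(σ_{i,j})_j`
extendable to a `ℤ_p`-basis of `Γ` (this is the hypothesis `hMonsky` below).  Then
there exists `ψ ∈ Γ`, extendable to a `ℤ_p`-basis, such that
`T_ψ = {χ : χ(ψ) = 1}` is not contained in `∇_g`; consequently, for the fixed field
`L'` of `ψ`, the image `p_{L/L'}(g)` is not divisible by `p` (witnessed by a character
trivial on `ψ` with `χ(g) ∉ p𝒪`). -/
theorem stmt_14 (p : ℕ) [Fact p.Prime] (d : ℕ) (hd : 2 ≤ d)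
    -- `∇_g ⊆ Γ̂`:
    (nabla : Set ((Fin d → ℤ_[p]) →ₗ[ℤ_[p]] QpModZp p))
    -- Monsky's theorem applied to `g` (using that `p ∤ g`):
    (hMonsky : nabla = ∅ ∨
      ∃ (n : ℕ) (ν : Fin n → ℕ)
        (σ : (i : Fin n) → Fin (ν i) → (Fin d → ℤ_[p]))
        (ζ : (i : Fin n) → Fin (ν i) → QpModZp p),
        (∀ i, 0 < ν i) ∧
        (∀ i, ∃ f : (Fin d → ℤ_[p]) →ₗ[ℤ_[p]] (Fin (ν i) → ℤ_[p]),
          ∀ j, f (σ i j) = Pi.single j 1) ∧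
        nabla ⊆ ⋃ i, {χ | ∀ j, χ (σ i j) = ζ i j}) :
    ∃ ψ : Fin d → ℤ_[p],
      (∃ f : (Fin d → ℤ_[p]) →ₗ[ℤ_[p]] ℤ_[p], f ψ = 1) ∧
      ¬ ({χ : (Fin d → ℤ_[p]) →ₗ[ℤ_[p]] QpModZp p | χ ψ = 0} ⊆ nabla) := by
  have hp1 : (1:ℝ) < p := by exact_mod_cast (Fact.out : p.Prime).one_lt
  rcases hMonsky with hempty | ⟨n, ν, σ, ζ, hν, hbasis, hsub⟩
  · -- `∇_g` empty: any unimodular `ψ` works, witnessed by the zero character.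
    refine ⟨Pi.single ⟨0, by omega⟩ 1, ⟨LinearMap.proj ⟨0, by omega⟩, by simp⟩, fun habs => ?_⟩
    have : (0 : (Fin d → ℤ_[p]) →ₗ[ℤ_[p]] QpModZp p) ∈ nabla := habs (by simp)
    rw [hempty] at this
    exact this
  · set i0 : Fin d := ⟨0, by omega⟩ with hi0
    set i1 : Fin d := ⟨1, by omega⟩ with hi1
    have hne : i1 ≠ i0 := by simp [hi0, hi1, Fin.ext_iff]
    set s : Fin n → (Fin d → ℤ_[p]) := fun i => σ i ⟨0, hν i⟩ with hsdef
    have hs : ∀ i, s i ≠ 0 := by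
      intro i h
      obtain ⟨f, hf⟩ := hbasis i
      have h1 := hf ⟨0, hν i⟩
      rw [show σ i ⟨0, hν i⟩ = s i from rfl, h, map_zero] at h1
      have := congrFun h1 ⟨0, hν i⟩
      simp at this
    obtain ⟨c, hc⟩ := stmt14_exists_c p d n s hs
    -- the linear functional `x ↦ ∑ x k * c ^ k`
    set lam : (Fin d → ℤ_[p]) →ₗ[ℤ_[p]] ℤ_[p] :=
      ∑ k : Fin d, c ^ (k:ℕ) • LinearMap.proj k with hlam
    have hlam_apply : ∀ x, lam x = ∑ k : Fin d, x k * c ^ (k:ℕ) := by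
      intro x
      simp [hlam, LinearMap.sum_apply, LinearMap.smul_apply, smul_eq_mul, mul_comm]
    have hlam_s : ∀ i, lam (s i) ≠ 0 := by
      intro i h
      exact hc i (by rw [← hlam_apply]; exact h)
    have hlam_single : ∀ k : Fin d, lam (Pi.single k 1) = c ^ (k:ℕ) := by
      intro k
      rw [hlam_apply, Finset.sum_eq_single k]
      · simp
      · intro b _ hb
        simp [Pi.single_eq_of_ne hb]
      · simp
    -- the element `ψ`
    set ψ : Fin d → ℤ_[p] := c • (Pi.single i0 (1:ℤ_[p]) : Fin d → ℤ_[p]) - (Pi.single i1 (1:ℤ_[p]) : Fin d → ℤ_[p]) with hψ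
    have hpsi0 : lam ψ = 0 := by
      rw [hψ, map_sub, map_smul, hlam_single, hlam_single]
      simp [hi0, hi1, smul_eq_mul]
    have hpsi_uni : ∃ f : (Fin d → ℤ_[p]) →ₗ[ℤ_[p]] ℤ_[p], f ψ = 1 := by
      refine ⟨-(LinearMap.proj i1), ?_⟩
      simp [hψ, Pi.single_eq_of_ne hne, Pi.single_eq_same]
    -- torsion exponents of the `ζ i` and choice of `N`
    choose m hm using fun i => stmt14_torsion p (ζ i ⟨0, hν i⟩)
    have hnorm : ∀ i, 0 < ‖((lam (s i) : ℤ_[p]) : ℚ_[p])‖ := by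
      intro i
      rw [norm_pos_iff]
      exact PadicInt.coe_ne_zero.mpr (hlam_s i)
    choose Ni hNi using fun i =>
      pow_unbounded_of_one_lt ((p:ℝ) ^ (m i) / ‖((lam (s i) : ℤ_[p]) : ℚ_[p])‖) hp1
    set N : ℕ := Finset.univ.sup Ni with hN
    have hNbig : ∀ i, (p:ℝ) ^ (m i) / ‖((lam (s i) : ℤ_[p]) : ℚ_[p])‖ < (p:ℝ) ^ N := by
      intro i
      exact (hNi i).trans_le
        (pow_le_pow_right₀ hp1.le (Finset.le_sup (Finset.mem_univ i)))
    -- the character `χ`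
    set t : ℚ_[p] := ((p:ℚ_[p]) ^ N)⁻¹ with ht
    set χ : (Fin d → ℤ_[p]) →ₗ[ℤ_[p]] QpModZp p :=
      (Submodule.mkQ _).comp ((t • (Algebra.linearMap ℤ_[p] ℚ_[p])).comp lam) with hχdef
    have hχ : ∀ x, χ x =
        Submodule.mkQ _ (t * ((lam x : ℤ_[p]) : ℚ_[p])) := by
      intro x
      simp [hχdef, LinearMap.smul_apply, PadicInt.algebraMap_apply, smul_eq_mul]
    refine ⟨ψ, hpsi_uni, fun habs => ?_⟩
    have hmem : χ ∈ nabla := habs (by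
      show χ ψ = 0
      rw [hχ, hpsi0]
      simp)
    obtain ⟨i, hTi⟩ := Set.mem_iUnion.mp (hsub hmem)
    have h0 : (p : ℤ_[p]) ^ (m i) • χ (s i) = 0 := by
      rw [show χ (s i) = ζ i ⟨0, hν i⟩ from hTi ⟨0, hν i⟩]
      exact hm i
    rw [hχ, ← map_smul, Submodule.mkQ_apply, Submodule.Quotient.mk_eq_zero,
      stmt14_mem_range_iff, stmt14_smul_eq] at h0
    push_cast at h0
    rw [norm_mul, norm_mul, norm_pow, Padic.norm_p, ht, norm_inv, norm_pow,
      Padic.norm_p] at h0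
    rw [inv_pow, inv_pow, inv_inv] at h0
    have h2 : (p:ℝ) ^ N * ‖((lam (s i) : ℤ_[p]) : ℚ_[p])‖ ≤ (p:ℝ) ^ (m i) := by
      have hpm : (0:ℝ) < (p:ℝ) ^ (m i) := by positivity
      rw [inv_mul_le_iff₀ hpm, mul_one] at h0
      exact h0
    exact absurd ((div_lt_iff₀ (hnorm i)).mp (hNbig i)) (not_lt.mpr h2)
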